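/- For ℓ = 1 at the point p = 1/2, the functions h₀(t) = 2√t(t·log(t) - t + 1)/(t-1)² and h₁(t) = -2√t(log(t) - t + 1)/(t-1)² satisfy the coupled system 4t²h_i'' - (8t²/(1-t))h_i' + (4t/(1-t)²)(h_{1-i} - h_i) = -h_i for i = 0,1 on (0,1), and lim_{t→1⁻} h_i(t) = 1 for i = 0,1. -/

import Mathlib

/-!
Over the common denominator `√t (t - 1)²` both functions have the shape
`(P t * log t + Q t) / (√t * (t - 1) ^ n)` with polynomials `P`, `Q`, and differentiation keeps
this shape, so each equation of the system reduces to a polynomial identity in `t` and `log t`.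
For the boundary values, `(log t - t + 1) / (t - 1)² → -1/2` by L'Hôpital, which gives both
limits because `t log t - t + 1 = t (log t - t + 1) + (t - 1)²`.
-/

open Set Filter Real Topology

theorem HasDerivAt.div_sqrt_mul_sub_one_pow {N : ℝ → ℝ} {N' x : ℝ} (hN : HasDerivAt N N' x)
    (n : ℕ) (hx : 0 < x) (hx1 : x ≠ 1) :
    HasDerivAt (fun y => N y / (√y * (y - 1) ^ n))
      ((N' - N x * (1 / (2 * x) + n / (x - 1))) / (√x * (x - 1) ^ n)) x := by
  have hs : √x ≠ 0 := (sqrt_pos.mpr hx).ne'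
  have h1 : x - 1 ≠ 0 := sub_ne_zero.mpr hx1
  have hD : HasDerivAt (fun y => √y * (y - 1) ^ n)
      (1 / (2 * √x) * (x - 1) ^ n + √x * (n * (x - 1) ^ (n - 1) * 1)) x :=
    (hasDerivAt_sqrt hx.ne').mul (((hasDerivAt_id' x).sub_const 1).fun_pow n)
  refine (hN.div hD (mul_ne_zero hs (pow_ne_zero n h1))).congr_deriv ?_
  rcases n with _ | n
  · field_simp
    rw [sq_sqrt hx.le]
    ring
  · simp only [Nat.add_sub_cancel, pow_succ]
    field_simp
    rw [sq_sqrt hx.le]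

theorem Set.EqOn.deriv_of_hasDerivAt {𝕜 F : Type*} [NontriviallyNormedField 𝕜]
    [NormedAddCommGroup F] [NormedSpace 𝕜 F] {f g g' : 𝕜 → F} {s : Set 𝕜}
    (hfg : EqOn f g s) (hs : IsOpen s) (hg : ∀ x ∈ s, HasDerivAt g (g' x) x) :
    EqOn (_root_.deriv f) g' s :=
  fun x hx => (hfg.deriv hs hx).trans (hg x hx).deriv

theorem tendsto_log_sub_add_one_div_sq :
    Tendsto (fun t => (log t - t + 1) / (t - 1) ^ 2) (𝓝[≠] 1) (𝓝 (-1 / 2)) := by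
  have hpos : ∀ᶠ x in 𝓝[≠] (1 : ℝ), 0 < x := nhdsWithin_le_nhds (lt_mem_nhds one_pos)
  have hne : ∀ᶠ x in 𝓝[≠] (1 : ℝ), x ≠ 1 := self_mem_nhdsWithin
  refine HasDerivAt.lhopital_zero_nhdsNE (f' := fun x => x⁻¹ - 1) (g' := fun x => 2 * (x - 1))
    ?_ ?_ ?_ ?_ ?_ ?_
  · filter_upwards [hpos] with x hx
    exact ((hasDerivAt_log hx.ne').sub (hasDerivAt_id' x)).add_const 1
  · filter_upwards with x
    simpa using ((hasDerivAt_id' x).sub_const 1).fun_pow 2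
  · filter_upwards [hne] with x hx
    exact mul_ne_zero two_ne_zero (sub_ne_zero.mpr hx)
  · have : ContinuousAt (fun t => log t - t + 1) 1 := by fun_prop (disch := norm_num)
    simpa using this.tendsto.mono_left nhdsWithin_le_nhds
  · have : ContinuousAt (fun t : ℝ => (t - 1) ^ 2) 1 := by fun_prop
    simpa using this.tendsto.mono_left nhdsWithin_le_nhds
  · have hc : Tendsto (fun x : ℝ => -(2 * x)⁻¹) (𝓝[≠] 1) (𝓝 (-1 / 2)) := by
      have : ContinuousAt (fun x : ℝ => -(2 * x)⁻¹) 1 := by fun_prop (disch := norm_num)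
      convert this.tendsto.mono_left nhdsWithin_le_nhds using 2
      norm_num
    refine hc.congr' ?_
    filter_upwards [hpos, hne] with x hx hx1
    have : x - 1 ≠ 0 := sub_ne_zero.mpr hx1
    field_simp
    ring

theorem tendsto_sqrt_nhdsNE_one : Tendsto (fun y => √y) (𝓝[≠] 1) (𝓝 1) := by
  simpa using continuous_sqrt.continuousAt.tendsto.mono_left (nhdsWithin_le_nhds (a := (1 : ℝ)))

namespace SphericalFunction

noncomputable def F₀ (y : ℝ) : ℝ := 2 * y * (y * log y - y + 1) / (√y * (y - 1) ^ 2)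

noncomputable def F₁ (y : ℝ) : ℝ := -2 * y * (log y - y + 1) / (√y * (y - 1) ^ 2)

noncomputable def F₀' (y : ℝ) : ℝ :=
  (3 * y ^ 2 - 2 * y - 1 - (y ^ 2 + 3 * y) * log y) / (√y * (y - 1) ^ 3)

noncomputable def F₁' (y : ℝ) : ℝ :=
  ((3 * y + 1) * log y - y ^ 2 - 2 * y + 3) / (√y * (y - 1) ^ 3)

theorem eqOn_F₀ {h₀ : ℝ → ℝ}
    (hh₀ : ∀ t ∈ Ioo (0 : ℝ) 1, h₀ t = 2 * √t * (t * log t - t + 1) / (t - 1) ^ 2) :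
    EqOn h₀ F₀ (Ioo 0 1) := by
  intro t ht
  have : t - 1 ≠ 0 := sub_ne_zero.mpr ht.2.ne
  have : √t ≠ 0 := (sqrt_pos.mpr ht.1).ne'
  rw [hh₀ t ht, F₀]
  field_simp
  rw [sq_sqrt ht.1.le]

theorem eqOn_F₁ {h₁ : ℝ → ℝ}
    (hh₁ : ∀ t ∈ Ioo (0 : ℝ) 1, h₁ t = -2 * √t * (log t - t + 1) / (t - 1) ^ 2) :
    EqOn h₁ F₁ (Ioo 0 1) := by
  intro t ht
  have : t - 1 ≠ 0 := sub_ne_zero.mpr ht.2.ne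
  have : √t ≠ 0 := (sqrt_pos.mpr ht.1).ne'
  rw [hh₁ t ht, F₁]
  field_simp
  rw [sq_sqrt ht.1.le]

variable {x : ℝ}

theorem hasDerivAt_F₀ (hx : x ∈ Ioo 0 1) : HasDerivAt F₀ (F₀' x) x := by
  have : x ≠ 0 := hx.1.ne'
  have : x - 1 ≠ 0 := sub_ne_zero.mpr hx.2.ne
  have : √x ≠ 0 := (sqrt_pos.mpr hx.1).ne'
  have hN : HasDerivAt (fun y => 2 * y * (y * log y - y + 1))
      (2 * (x * log x - x + 1) + 2 * x * log x) x := by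
    refine (((hasDerivAt_id' x).const_mul 2).fun_mul ((((hasDerivAt_id' x).fun_mul
      (hasDerivAt_log hx.1.ne')).fun_sub (hasDerivAt_id' x)).add_const 1)).congr_deriv ?_
    field_simp
    ring
  refine (hN.div_sqrt_mul_sub_one_pow 2 hx.1 hx.2.ne).congr_deriv ?_
  unfold F₀'
  field_simp
  ring

theorem hasDerivAt_F₁ (hx : x ∈ Ioo 0 1) : HasDerivAt F₁ (F₁' x) x := by
  have : x ≠ 0 := hx.1.ne'
  have : x - 1 ≠ 0 := sub_ne_zero.mpr hx.2.ne
  have : √x ≠ 0 := (sqrt_pos.mpr hx.1).ne'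
  have hN : HasDerivAt (fun y => -2 * y * (log y - y + 1))
      (-2 * (log x - x + 1) - 2 * x * (x⁻¹ - 1)) x := by
    refine (((hasDerivAt_id' x).const_mul (-2)).fun_mul (((hasDerivAt_log hx.1.ne').fun_sub
      (hasDerivAt_id' x)).add_const 1)).congr_deriv ?_
    ring
  refine (hN.div_sqrt_mul_sub_one_pow 2 hx.1 hx.2.ne).congr_deriv ?_
  unfold F₁'
  field_simp
  ring

theorem coupled_ode_fst {h₀ h₁ : ℝ → ℝ} (hh₀ : EqOn h₀ F₀ (Ioo 0 1))
    (hh₁ : EqOn h₁ F₁ (Ioo 0 1)) {t : ℝ} (ht : t ∈ Ioo 0 1) :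
    4 * t ^ 2 * deriv (deriv h₀) t - (8 * t ^ 2 / (1 - t)) * deriv h₀ t
      + (4 * t / (1 - t) ^ 2) * (h₁ t - h₀ t) = -h₀ t := by
  have hd : EqOn (deriv h₀) F₀' (Ioo 0 1) :=
    hh₀.deriv_of_hasDerivAt isOpen_Ioo fun x hx => hasDerivAt_F₀ hx
  have hM : ∀ x ∈ Ioo (0 : ℝ) 1,
      HasDerivAt (fun y => 3 * y ^ 2 - 2 * y - 1 - (y ^ 2 + 3 * y) * log y)
        (6 * x - 2 - (2 * x + 3) * log x - (x + 3)) x := by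
    intro x hx
    have : x ≠ 0 := hx.1.ne'
    refine ((((hasDerivAt_id' x).fun_pow 2).const_mul 3 |>.fun_sub
      ((hasDerivAt_id' x).const_mul 2) |>.sub_const 1).fun_sub
      ((((hasDerivAt_id' x).fun_pow 2).fun_add ((hasDerivAt_id' x).const_mul 3)).fun_mul
        (hasDerivAt_log hx.1.ne'))).congr_deriv ?_
    field_simp
    ring
  have hdd := hd.deriv_of_hasDerivAt isOpen_Ioo fun x hx =>
    (hM x hx).div_sqrt_mul_sub_one_pow 3 hx.1 hx.2.ne
  rw [hdd ht, hd ht, hh₀ ht, hh₁ ht]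
  have : t ≠ 0 := ht.1.ne'
  have : t - 1 ≠ 0 := sub_ne_zero.mpr ht.2.ne
  have : 1 - t ≠ 0 := sub_ne_zero.mpr ht.2.ne'
  have : √t ≠ 0 := (sqrt_pos.mpr ht.1).ne'
  unfold F₀' F₀ F₁
  field_simp
  ring

theorem coupled_ode_snd {h₀ h₁ : ℝ → ℝ} (hh₀ : EqOn h₀ F₀ (Ioo 0 1))
    (hh₁ : EqOn h₁ F₁ (Ioo 0 1)) {t : ℝ} (ht : t ∈ Ioo 0 1) :
    4 * t ^ 2 * deriv (deriv h₁) t - (8 * t ^ 2 / (1 - t)) * deriv h₁ t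
      + (4 * t / (1 - t) ^ 2) * (h₀ t - h₁ t) = -h₁ t := by
  have hd : EqOn (deriv h₁) F₁' (Ioo 0 1) :=
    hh₁.deriv_of_hasDerivAt isOpen_Ioo fun x hx => hasDerivAt_F₁ hx
  have hM : ∀ x ∈ Ioo (0 : ℝ) 1,
      HasDerivAt (fun y => (3 * y + 1) * log y - y ^ 2 - 2 * y + 3)
        (3 * log x + (3 * x + 1) / x - 2 * x - 2) x := by
    intro x hx
    refine ((((hasDerivAt_id' x).const_mul 3).add_const 1).fun_mul (hasDerivAt_log hx.1.ne')
      |>.fun_sub ((hasDerivAt_id' x).fun_pow 2) |>.fun_sub ((hasDerivAt_id' x).const_mul 2)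
      |>.add_const 3).congr_deriv ?_
    have : x ≠ 0 := hx.1.ne'
    field_simp
    ring
  have hdd := hd.deriv_of_hasDerivAt isOpen_Ioo fun x hx =>
    (hM x hx).div_sqrt_mul_sub_one_pow 3 hx.1 hx.2.ne
  rw [hdd ht, hd ht, hh₀ ht, hh₁ ht]
  have : t ≠ 0 := ht.1.ne'
  have : t - 1 ≠ 0 := sub_ne_zero.mpr ht.2.ne
  have : 1 - t ≠ 0 := sub_ne_zero.mpr ht.2.ne'
  have : √t ≠ 0 := (sqrt_pos.mpr ht.1).ne'
  unfold F₁' F₀ F₁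
  field_simp
  ring

theorem tendsto_F₀ : Tendsto F₀ (𝓝[≠] 1) (𝓝 1) := by
  have hid : Tendsto (fun y : ℝ => y) (𝓝[≠] 1) (𝓝 1) :=
    tendsto_nhdsWithin_of_tendsto_nhds tendsto_id
  have hlim := (tendsto_sqrt_nhdsNE_one.const_mul 2).mul
    ((hid.mul tendsto_log_sub_add_one_div_sq).add_const 1)
  norm_num at hlim
  refine hlim.congr' ?_
  filter_upwards [nhdsWithin_le_nhds (lt_mem_nhds one_pos), self_mem_nhdsWithin] with y hy hy1
  have : y - 1 ≠ 0 := sub_ne_zero.mpr hy1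
  have : √y ≠ 0 := (sqrt_pos.mpr hy).ne'
  rw [F₀]
  field_simp
  rw [sq_sqrt hy.le]
  ring

theorem tendsto_F₁ : Tendsto F₁ (𝓝[≠] 1) (𝓝 1) := by
  have hlim := (tendsto_sqrt_nhdsNE_one.const_mul (-2)).mul tendsto_log_sub_add_one_div_sq
  norm_num at hlim
  refine hlim.congr' ?_
  filter_upwards [nhdsWithin_le_nhds (lt_mem_nhds one_pos), self_mem_nhdsWithin] with y hy hy1
  have : y - 1 ≠ 0 := sub_ne_zero.mpr hy1
  have : √y ≠ 0 := (sqrt_pos.mpr hy).ne'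
  rw [F₁]
  field_simp
  rw [sq_sqrt hy.le]

end SphericalFunction

open SphericalFunction

/-- For `ℓ = 1`, `p = 1/2`: `h₀(t) = 2√t(t log t - t + 1)/(t-1)²` and
`h₁(t) = -2√t(log t - t + 1)/(t-1)²` satisfy the coupled system
`4t²hᵢ'' - (8t²/(1-t))hᵢ' + (4t/(1-t)²)(h_{1-i} - hᵢ) = -hᵢ` on `(0,1)`, and
both tend to `1` as `t → 1⁻`. -/
theorem stmt12 (h₀ h₁ : ℝ → ℝ)
    (hh₀ : ∀ t ∈ Ioo (0 : ℝ) 1,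
      h₀ t = 2 * Real.sqrt t * (t * Real.log t - t + 1) / (t - 1) ^ 2)
    (hh₁ : ∀ t ∈ Ioo (0 : ℝ) 1,
      h₁ t = -2 * Real.sqrt t * (Real.log t - t + 1) / (t - 1) ^ 2) :
    (∀ t ∈ Ioo (0 : ℝ) 1,
      4 * t ^ 2 * deriv (deriv h₀) t - (8 * t ^ 2 / (1 - t)) * deriv h₀ t
        + (4 * t / (1 - t) ^ 2) * (h₁ t - h₀ t) = -h₀ t) ∧
    (∀ t ∈ Ioo (0 : ℝ) 1,
      4 * t ^ 2 * deriv (deriv h₁) t - (8 * t ^ 2 / (1 - t)) * deriv h₁ t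
        + (4 * t / (1 - t) ^ 2) * (h₀ t - h₁ t) = -h₁ t) ∧
    Tendsto h₀ (nhdsWithin 1 (Iio 1)) (nhds 1) ∧
    Tendsto h₁ (nhdsWithin 1 (Iio 1)) (nhds 1) := by
  have e₀ := eqOn_F₀ hh₀
  have e₁ := eqOn_F₁ hh₁
  have hU : Ioo (0 : ℝ) 1 ∈ 𝓝[<] 1 := Ioo_mem_nhdsLT one_pos
  refine ⟨fun _ => coupled_ode_fst e₀ e₁, fun _ => coupled_ode_snd e₀ e₁, ?_, ?_⟩
  · exact (tendsto_F₀.mono_left (nhdsLT_le_nhdsNE 1)).congr' (e₀.symm.eventuallyEq_of_mem hU)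
  · exact (tendsto_F₁.mono_left (nhdsLT_le_nhdsNE 1)).congr' (e₁.symm.eventuallyEq_of_mem hU)
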